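/- Let σ > 0 and X ∈ ℝ^{n×n}. For any (Z, W) ∈ ℝ^{n×n} × Range(Q), setting X⁺ := X − σ(Z + QW + G) and g(Z,W) := δ*_{𝔅_n}(Z) + ½⟨W, QW⟩, one has g(Z, W) − inf(D) ≤ (L_σ(Z, W; X) − inf_{(Z',W') ∈ ℝ^{n×n} × Range(Q)} L_σ(Z', W'; X)) + (1/(2σ))(‖X‖² − ‖X⁺‖²), where inf(D) is the optimal value of problem (D). -/

import Mathlib

open Filter Topology
open scoped RealInnerProductSpace

/-- The space `ℝ^{n×n}` of square matrices endowed with the Frobenius (Euclidean)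
inner product, realized as a Euclidean space indexed by pairs. -/
abbrev MatSp (n : ℕ) := EuclideanSpace ℝ (Fin n × Fin n)

/-- The Birkhoff polytope `𝔅ₙ` of doubly stochastic matrices. -/
def Birkhoff (n : ℕ) : Set (MatSp n) :=
  {X | (∀ i, ∑ j, X (i, j) = 1) ∧ (∀ j, ∑ i, X (i, j) = 1) ∧ ∀ q, 0 ≤ X q}

/-- The support function `δ*_{𝔅ₙ}(Z) = max_{X ∈ 𝔅ₙ} ⟨X, Z⟩` of the Birkhoff polytope. -/
noncomputable def suppB (n : ℕ) (Z : MatSp n) : ℝ :=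
  sSup ((fun X => ⟪X, Z⟫) '' Birkhoff n)

/-- The primal objective of problem (P): `f(X) = ½⟨X, QX⟩ + ⟨G, X⟩`. -/
noncomputable def objP {n : ℕ} (Q : MatSp n →ₗ[ℝ] MatSp n) (G X : MatSp n) : ℝ :=
  (1 / 2) * ⟪X, Q X⟫ + ⟪G, X⟫

/-- The feasible set of the dual problem (D): `Z + QW + G = 0`, `W ∈ Range(Q)`. -/
def feasD {n : ℕ} (Q : MatSp n →ₗ[ℝ] MatSp n) (G : MatSp n) :
    Set (MatSp n × MatSp n) :=
  {zw | zw.1 + Q zw.2 + G = 0 ∧ zw.2 ∈ LinearMap.range Q}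

/-- The dual objective `g(Z, W) = δ*_{𝔅ₙ}(Z) + ½⟨W, QW⟩`. -/
noncomputable def objD {n : ℕ} (Q : MatSp n →ₗ[ℝ] MatSp n) (zw : MatSp n × MatSp n) : ℝ :=
  suppB n zw.1 + (1 / 2) * ⟪zw.2, Q zw.2⟫

/-- The optimal solution set of problem (P). -/
noncomputable def solP {n : ℕ} (Q : MatSp n →ₗ[ℝ] MatSp n) (G : MatSp n) : Set (MatSp n) :=
  {X ∈ Birkhoff n | ∀ Y ∈ Birkhoff n, objP Q G X ≤ objP Q G Y}

/-- The optimal solution set of problem (D). -/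
noncomputable def solD {n : ℕ} (Q : MatSp n →ₗ[ℝ] MatSp n) (G : MatSp n) :
    Set (MatSp n × MatSp n) :=
  {zw ∈ feasD Q G | ∀ zw' ∈ feasD Q G, objD Q zw ≤ objD Q zw'}

/-- The augmented Lagrangian
`L_σ(Z, W; X) = δ*_{𝔅ₙ}(Z) + ½⟨W, QW⟩ − ⟨X, Z + QW + G⟩ + (σ/2)‖Z + QW + G‖²`. -/
noncomputable def augL {n : ℕ} (Q : MatSp n →ₗ[ℝ] MatSp n) (G : MatSp n) (σ : ℝ)
    (Z W X : MatSp n) : ℝ :=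
  suppB n Z + (1 / 2) * ⟪W, Q W⟫ - ⟪X, Z + Q W + G⟫ + (σ / 2) * ‖Z + Q W + G‖ ^ 2

/-!
The dual objective is `g = L_σ(·, ·; X) + ⟨X, R⟩ - (σ/2)‖R‖²` with residual `R = Z + QW + G`,
and `⟨X, R⟩ - (σ/2)‖R‖² = (1/(2σ))(‖X‖² - ‖X - σR‖²)`. So the inequality reduces to
`inf L_σ ≤ inf (D)`, which holds because `L_σ = g` on the feasible set of (D). The infimum of
`L_σ` is a genuine one: pairing with any doubly stochastic `Y` and completing squares bounds
`L_σ` below by `-‖Y - X‖²/(2σ) - ½⟨Y, QY⟩ - ⟨Y, G⟩`.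
-/

section InnerProductSpace

variable {E : Type*} [NormedAddCommGroup E] [InnerProductSpace ℝ E]

theorem two_mul_inner_map_le_of_psd {T : E →ₗ[ℝ] E}
    (hsa : ∀ x y, ⟪T x, y⟫ = ⟪x, T y⟫) (hpsd : ∀ x, 0 ≤ ⟪x, T x⟫) (x y : E) :
    2 * ⟪y, T x⟫ ≤ ⟪x, T x⟫ + ⟪y, T y⟫ := by
  have hsymm : ⟪x, T y⟫ = ⟪y, T x⟫ := by rw [← hsa, real_inner_comm]
  have := hpsd (x - y)
  rw [map_sub, inner_sub_left, inner_sub_right, inner_sub_right, hsymm] at this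
  linarith

theorem neg_norm_sq_div_le_inner_add {σ : ℝ} (hσ : 0 < σ) (u r : E) :
    -‖u‖ ^ 2 / (2 * σ) ≤ ⟪u, r⟫ + σ / 2 * ‖r‖ ^ 2 := by
  have hsq : ‖u + σ • r‖ ^ 2 = ‖u‖ ^ 2 + 2 * σ * ⟪u, r⟫ + σ ^ 2 * ‖r‖ ^ 2 := by
    rw [norm_add_sq_real, real_inner_smul_right, norm_smul, mul_pow, Real.norm_eq_abs, sq_abs]
    ring
  rw [div_le_iff₀ (by positivity)]
  nlinarith [sq_nonneg ‖u + σ • r‖]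

theorem one_div_two_mul_mul_norm_sq_sub_norm_sub_smul_sq {σ : ℝ} (hσ : σ ≠ 0) (x r : E) :
    1 / (2 * σ) * (‖x‖ ^ 2 - ‖x - σ • r‖ ^ 2) = ⟪x, r⟫ - σ / 2 * ‖r‖ ^ 2 := by
  rw [norm_sub_sq_real, real_inner_smul_right, norm_smul, mul_pow, Real.norm_eq_abs, sq_abs]
  field_simp
  ring

end InnerProductSpace

section Birkhoff

theorem birkhoff_nonempty (n : ℕ) : (Birkhoff n).Nonempty :=
  ⟨WithLp.toLp 2 fun q => if q.1 = q.2 then 1 else 0,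
    fun i => by simp, fun j => by simp, fun q => by dsimp only; split_ifs <;> norm_num⟩

variable {n : ℕ}

theorem Birkhoff.apply_le_one {Y : MatSp n} (hY : Y ∈ Birkhoff n) (q : Fin n × Fin n) :
    Y q ≤ 1 := by
  rw [← hY.1 q.1]
  exact Finset.single_le_sum (f := fun j => Y (q.1, j)) (fun j _ => hY.2.2 _)
    (Finset.mem_univ q.2)

theorem Birkhoff.inner_le_sum_abs {Y : MatSp n} (hY : Y ∈ Birkhoff n) (Z : MatSp n) :
    ⟪Y, Z⟫ ≤ ∑ q, |Z q| := by
  rw [PiLp.inner_apply]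
  refine Finset.sum_le_sum fun q _ => ?_
  calc ⟪Y q, Z q⟫ = Y q * Z q := by rw [real_inner_eq_re_inner, RCLike.inner_apply, mul_comm]; rfl
    _ ≤ Y q * |Z q| := mul_le_mul_of_nonneg_left (le_abs_self _) (hY.2.2 q)
    _ ≤ |Z q| := mul_le_of_le_one_left (abs_nonneg _) (Birkhoff.apply_le_one hY q)

theorem Birkhoff.inner_le_suppB {Y : MatSp n} (hY : Y ∈ Birkhoff n) (Z : MatSp n) :
    ⟪Y, Z⟫ ≤ suppB n Z := by
  refine le_csSup ⟨∑ q, |Z q|, ?_⟩ ⟨Y, hY, rfl⟩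
  rintro _ ⟨Y', hY', rfl⟩
  exact Birkhoff.inner_le_sum_abs hY' Z

end Birkhoff

section AugmentedLagrangian

variable {n : ℕ} (Q : MatSp n →ₗ[ℝ] MatSp n) (G : MatSp n)

theorem augL_eq_objD_sub_add (σ : ℝ) (Z W X : MatSp n) :
    augL Q G σ Z W X
      = objD Q (Z, W) - ⟪X, Z + Q W + G⟫ + σ / 2 * ‖Z + Q W + G‖ ^ 2 := rfl

theorem augL_eq_objD_of_mem_feasD (σ : ℝ) {zw : MatSp n × MatSp n} (hzw : zw ∈ feasD Q G)
    (X : MatSp n) : augL Q G σ zw.1 zw.2 X = objD Q zw := by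
  rw [augL_eq_objD_sub_add, hzw.1]
  simp

theorem le_augL_of_mem_birkhoff (hsa : ∀ X Y : MatSp n, ⟪Q X, Y⟫ = ⟪X, Q Y⟫)
    (hpsd : ∀ X : MatSp n, 0 ≤ ⟪X, Q X⟫) {σ : ℝ} (hσ : 0 < σ) {Y : MatSp n}
    (hY : Y ∈ Birkhoff n) (Z W X : MatSp n) :
    -‖Y - X‖ ^ 2 / (2 * σ) - 1 / 2 * ⟪Y, Q Y⟫ - ⟪Y, G⟫ ≤ augL Q G σ Z W X := by
  set R := Z + Q W + G with hR
  have hsupp : ⟪Y, R⟫ - ⟪Y, Q W⟫ - ⟪Y, G⟫ ≤ suppB n Z := by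
    rw [hR, inner_add_right, inner_add_right]
    linarith [Birkhoff.inner_le_suppB hY Z]
  have hquad := two_mul_inner_map_le_of_psd hsa hpsd W Y
  have hres := neg_norm_sq_div_le_inner_add hσ (Y - X) R
  rw [inner_sub_left] at hres
  rw [augL]
  linarith

theorem bddBelow_augL (hsa : ∀ X Y : MatSp n, ⟪Q X, Y⟫ = ⟪X, Q Y⟫)
    (hpsd : ∀ X : MatSp n, 0 ≤ ⟪X, Q X⟫) {σ : ℝ} (hσ : 0 < σ) (X : MatSp n)
    (S : Set (MatSp n × MatSp n)) :
    BddBelow ((fun zw : MatSp n × MatSp n => augL Q G σ zw.1 zw.2 X) '' S) := by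
  obtain ⟨Y, hY⟩ := birkhoff_nonempty n
  refine ⟨-‖Y - X‖ ^ 2 / (2 * σ) - 1 / 2 * ⟪Y, Q Y⟫ - ⟪Y, G⟫, ?_⟩
  rintro _ ⟨zw, -, rfl⟩
  exact le_augL_of_mem_birkhoff Q G hsa hpsd hσ hY zw.1 zw.2 X

theorem sInf_augL_le_sInf_objD (hsa : ∀ X Y : MatSp n, ⟪Q X, Y⟫ = ⟪X, Q Y⟫)
    (hpsd : ∀ X : MatSp n, 0 ≤ ⟪X, Q X⟫) {σ : ℝ} (hσ : 0 < σ) (X : MatSp n) :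
    sInf ((fun zw : MatSp n × MatSp n => augL Q G σ zw.1 zw.2 X) ''
        {zw : MatSp n × MatSp n | zw.2 ∈ LinearMap.range Q})
      ≤ sInf (objD Q '' feasD Q G) := by
  have hfeas : ((-G, 0) : MatSp n × MatSp n) ∈ feasD Q G := ⟨by simp, Submodule.zero_mem _⟩
  refine csInf_le_csInf (bddBelow_augL Q G hsa hpsd hσ X _) ⟨_, _, hfeas, rfl⟩ ?_
  rintro _ ⟨zw, hzw, rfl⟩
  exact ⟨zw, hzw.2, augL_eq_objD_of_mem_feasD Q G σ hzw X⟩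

end AugmentedLagrangian

theorem stmt_15_general (n : ℕ) (Q : MatSp n →ₗ[ℝ] MatSp n)
    (hsa : ∀ X Y : MatSp n, ⟪Q X, Y⟫ = ⟪X, Q Y⟫)
    (hpsd : ∀ X : MatSp n, 0 ≤ ⟪X, Q X⟫)
    (G : MatSp n) (σ : ℝ) (hσ : 0 < σ)
    (X Z W : MatSp n) :
    objD Q (Z, W) - sInf (objD Q '' feasD Q G)
      ≤ (augL Q G σ Z W X -
          sInf ((fun zw : MatSp n × MatSp n => augL Q G σ zw.1 zw.2 X) ''
            {zw : MatSp n × MatSp n | zw.2 ∈ LinearMap.range Q}))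
        + (1 / (2 * σ)) * (‖X‖ ^ 2 - ‖X - σ • (Z + Q W + G)‖ ^ 2) := by
  have hinf := sInf_augL_le_sInf_objD Q G hsa hpsd hσ X
  rw [one_div_two_mul_mul_norm_sq_sub_norm_sub_smul_sq hσ.ne', augL_eq_objD_sub_add]
  linarith

/-- for any `(Z, W)` with `W ∈ Range(Q)` and `X⁺ = X − σ(Z + QW + G)`,
`g(Z, W) − inf(D) ≤ (L_σ(Z, W; X) − inf L_σ(·, ·; X)) + (1/(2σ))(‖X‖² − ‖X⁺‖²)`. -/
theorem stmt_15 (n : ℕ) (Q : MatSp n →ₗ[ℝ] MatSp n)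
    (hsa : ∀ X Y : MatSp n, ⟪Q X, Y⟫ = ⟪X, Q Y⟫)
    (hpsd : ∀ X : MatSp n, 0 ≤ ⟪X, Q X⟫)
    (G : MatSp n) (σ : ℝ) (hσ : 0 < σ)
    (X Z W : MatSp n) (hW : W ∈ LinearMap.range Q) :
    objD Q (Z, W) - sInf (objD Q '' feasD Q G)
      ≤ (augL Q G σ Z W X -
          sInf ((fun zw : MatSp n × MatSp n => augL Q G σ zw.1 zw.2 X) ''
            {zw : MatSp n × MatSp n | zw.2 ∈ LinearMap.range Q}))
        + (1 / (2 * σ)) * (‖X‖ ^ 2 - ‖X - σ • (Z + Q W + G)‖ ^ 2) :=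
  stmt_15_general n Q hsa hpsd G σ hσ X Z W
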